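/- Let i ≥ 1 and let R = ℤ[X₀,…,X_{i−1}] be the multivariate polynomial ring in i variables (indexed by Fin i). For a subset S of the index set, write ℓ_S = Σ_{j∈S} X_j. In the formal power series ring R⟦t⟧, set F = ∏_{S : (i−|S|) even} (1 + ℓ_S·t) and G = ∏_{S : (i−|S|) odd} (1 + ℓ_S·t), where the products run over all subsets S of Fin i. Then G is a unit in R⟦t⟧ (its constant coefficient is 1), and the coefficient of t^i in F·G⁻¹ equals (−1)^{i−1}·(i−1)!·X₀·X₁⋯X_{i−1}. -/

import Mathlib

/-!
Write `D = F·G⁻¹ = ∏_S (1 + ℓ_S t)^{±1}`. Its logarithmic derivative is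
`∑_S (-1)^{i-|S|} ℓ_S / (1 + ℓ_S t)`, whose coefficient of `t^k` is
`(-1)^k ∑_S (-1)^{i-|S|} ℓ_S^{k+1}`. By inclusion–exclusion this alternating power sum
vanishes for `k + 1 < i` and equals `i!·X₀⋯X_{i-1}` for `k + 1 = i`. Hence `D' = D·L` with
`L ≡ (-1)^{i-1} i!·X₀⋯X_{i-1}·t^{i-1} mod t^i`, so comparing coefficients of `t^{i-1}` gives
`i·[t^i]D = (-1)^{i-1} i!·X₀⋯X_{i-1}`, and `i` can be cancelled in the torsion-free ring `R`.
-/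

open Finset PowerSeries
open scoped Nat

theorem Finset.sum_powerset_neg_one_pow_mul_sum_pow {A ι : Type*} [CommRing A] [DecidableEq ι]
    (x : ι → A) (s : Finset ι) {m : ℕ} (hm : m ≤ #s) :
    ∑ t ∈ s.powerset, (-1) ^ (#s - #t) * (∑ j ∈ t, x j) ^ m =
      if m = #s then (#s)! * ∏ j ∈ s, x j else 0 := by
  induction s using Finset.induction_on generalizing m with
  | empty => simp_all
  | insert a s ha ih =>
    -- pairing `t` with `insert a t` leaves `(ℓ_t + x a)^m - ℓ_t^m`, a combination of `ℓ_t^k`, k < m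
    have hsplit : ∀ t ∈ s.powerset,
        (-1) ^ (#(insert a s) - #t) * (∑ j ∈ t, x j) ^ m
          + (-1) ^ (#(insert a s) - #(insert a t)) * (∑ j ∈ insert a t, x j) ^ m
        = ∑ k ∈ range m, m.choose k * x a ^ (m - k) *
            ((-1) ^ (#s - #t) * (∑ j ∈ t, x j) ^ k) := by
      intro t ht
      have hat : a ∉ t := fun h => ha (mem_powerset.mp ht h)
      have hts : #t ≤ #s := card_le_card (mem_powerset.mp ht)
      rw [card_insert_of_notMem ha, card_insert_of_notMem hat, sum_insert hat,
        Nat.add_sub_add_right, Nat.sub_add_comm hts, pow_succ, add_comm (x a), add_pow,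
        sum_range_succ, Nat.sub_self, pow_zero, Nat.choose_self, Nat.cast_one, mul_one, mul_one,
        mul_add, mul_sum]
      have hterms : ∀ k ∈ range m,
          (-1) ^ (#s - #t) * ((∑ j ∈ t, x j) ^ k * x a ^ (m - k) * m.choose k) =
            m.choose k * x a ^ (m - k) * ((-1) ^ (#s - #t) * (∑ j ∈ t, x j) ^ k) :=
        fun _ _ => by ring
      rw [sum_congr rfl hterms]
      ring
    rw [sum_powerset_insert ha, ← sum_add_distrib, sum_congr rfl hsplit, sum_comm]
    rw [card_insert_of_notMem ha] at hm ⊢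
    have hih : ∀ k ∈ range m, ∑ t ∈ s.powerset, m.choose k * x a ^ (m - k) *
          ((-1) ^ (#s - #t) * (∑ j ∈ t, x j) ^ k)
        = if k = #s then m.choose k * x a ^ (m - k) * ((#s)! * ∏ j ∈ s, x j) else 0 := by
      intro k hk
      rw [← mul_sum, ih (by rw [mem_range] at hk; omega), mul_ite, mul_zero]
    rw [sum_congr rfl hih, sum_ite_eq', prod_insert ha]
    by_cases hms : m = #s + 1
    · subst hms
      rw [if_pos (self_mem_range_succ _), if_pos rfl, Nat.choose_succ_self_right,
        Nat.factorial_succ, Nat.add_sub_cancel_left]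
      push_cast
      ring
    · rw [if_neg (by rw [mem_range]; omega), if_neg hms]

section
variable {R A : Type*} [CommSemiring R] [CommRing A] [Algebra R A] (D : Derivation R A A)

theorem Derivation.leibniz_prod_of_mul_eq_one {ι : Type*} (s : Finset ι) {f g : ι → A}
    (h : ∀ x ∈ s, f x * g x = 1) :
    D (∏ x ∈ s, f x) = (∏ x ∈ s, f x) * ∑ x ∈ s, D (f x) * g x := by
  classical
  induction s using Finset.induction_on with
  | empty => simp
  | insert a s ha ih =>
    rw [prod_insert ha, sum_insert ha, D.leibniz, smul_eq_mul, smul_eq_mul,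
      ih fun x hx => h x (mem_insert_of_mem hx)]
    linear_combination -(∏ x ∈ s, f x) * D (f a) * h a (mem_insert_self a s)

theorem Derivation.leibniz_div_of_mul_eq_one {F G H u v : A} (hGH : G * H = 1)
    (hF : D F = F * u) (hG : D G = G * v) : D (F * H) = F * H * (u - v) := by
  have hH : G * D H + H * D G = 0 := by
    simpa only [D.leibniz, smul_eq_mul, D.map_one_eq_zero] using congrArg D hGH
  rw [D.leibniz, smul_eq_mul, smul_eq_mul, hF]
  linear_combination (-(F * D H) - F * H * v) * hGH + F * H * hH - F * H * H * hG
end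

theorem Finset.sum_filter_even_sub_sum_filter_odd {ι A : Type*} [CommRing A] (s : Finset ι)
    (e : ι → ℕ) (f : ι → A) :
    ∑ x ∈ s with Even (e x), f x - ∑ x ∈ s with Odd (e x), f x =
      ∑ x ∈ s, (-1) ^ e x * f x := by
  rw [← sum_filter_add_sum_filter_not s (fun x => Even (e x)), sub_eq_add_neg,
    ← sum_neg_distrib]
  congr 1
  · exact sum_congr rfl fun x hx => by rw [(mem_filter.mp hx).2.neg_one_pow, one_mul]
  · simp only [Nat.not_even_iff_odd]
    exact sum_congr rfl fun x hx => by rw [(mem_filter.mp hx).2.neg_one_pow, neg_one_mul]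

namespace PowerSeries
variable {A : Type*} [CommRing A]

theorem one_add_C_mul_X_mul_mk_neg_pow (a : A) :
    (1 + C a * X) * mk (fun k => (-a) ^ k) = 1 := by
  have h := congrArg (rescale (-a)) (mk_one_mul_one_sub_eq_one A)
  rw [map_mul, map_sub, map_one, rescale_X, mul_comm, map_neg, neg_mul, sub_neg_eq_add,
    rescale_mk] at h
  simpa only [Pi.one_apply, mul_one] using h

theorem derivative_prod_one_add_C_mul_X {ι : Type*} (s : Finset ι) (a : ι → A) :
    d⁄dX A (∏ x ∈ s, (1 + C (a x) * X)) =
      (∏ x ∈ s, (1 + C (a x) * X)) * ∑ x ∈ s, C (a x) * mk (fun k => (-a x) ^ k) := by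
  simp [(d⁄dX A).leibniz_prod_of_mul_eq_one s fun x _ => one_add_C_mul_X_mul_mk_neg_pow (a x)]

theorem coeff_sum_C_mul_mk_neg_pow {ι : Type*} (s : Finset ι) (a : ι → A) (k : ℕ) :
    coeff k (∑ x ∈ s, C (a x) * mk (fun k => (-a x) ^ k)) =
      (-1) ^ k * ∑ x ∈ s, a x ^ (k + 1) := by
  simp only [map_sum, coeff_C_mul, coeff_mk, mul_sum]
  exact sum_congr rfl fun x _ => by ring

theorem coeff_succ_eq_of_derivative_eq_mul [IsAddTorsionFree A] {D L : A⟦X⟧} {n : ℕ} {c : A}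
    (hD₀ : constantCoeff D = 1) (hD : d⁄dX A D = D * L) (hL : ∀ k < n, coeff k L = 0)
    (hLn : coeff n L = (n + 1) * c) : coeff (n + 1) D = c := by
  obtain ⟨L', rfl⟩ := X_pow_dvd_iff.mpr hL
  have hcoeff (P : A⟦X⟧) : coeff n (X ^ n * P) = constantCoeff P := by
    simpa using coeff_X_pow_mul P n 0
  have h := congrArg (coeff n) hD
  rw [coeff_derivative, mul_left_comm, hcoeff, map_mul, hD₀, one_mul, ← hcoeff, hLn,
    mul_comm] at h
  apply nsmul_right_injective (Nat.succ_ne_zero n)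
  simpa only [nsmul_eq_mul, Nat.cast_succ] using h

end PowerSeries

/-- **Lemma (factor), splitting-principle form.**
For `i ≥ 1`, with one variable `X j` for each `j : Fin i` (the first Chern classes of the
invertible sheaves `L₁, …, Lᵢ`), set `ℓ_S = ∑_{j ∈ S} X j` for each subset `S`.
Let `F` be the product of `1 + ℓ_S·t` over subsets `S` with `i - |S|` even, and `G` the
analogous product over subsets with `i - |S|` odd.  Then `G` is a unit of the power series
ring, and the coefficient of `t^i` in `F·G⁻¹` is `(-1)^(i-1)·(i-1)!·X₀⋯X_{i-1}`. -/
theorem stmt1 (i : ℕ) (hi : 1 ≤ i)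
    (F G : PowerSeries (MvPolynomial (Fin i) ℤ))
    (hF : F = ∏ S ∈ Finset.univ.filter (fun S : Finset (Fin i) => Even (i - S.card)),
      (1 + PowerSeries.C (R := MvPolynomial (Fin i) ℤ) (∑ j ∈ S, MvPolynomial.X j) *
        PowerSeries.X))
    (hG : G = ∏ S ∈ Finset.univ.filter (fun S : Finset (Fin i) => Odd (i - S.card)),
      (1 + PowerSeries.C (R := MvPolynomial (Fin i) ℤ) (∑ j ∈ S, MvPolynomial.X j) *
        PowerSeries.X)) :
    IsUnit G ∧
    ∀ H : PowerSeries (MvPolynomial (Fin i) ℤ), G * H = 1 →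
      PowerSeries.coeff (R := MvPolynomial (Fin i) ℤ) i (F * H) =
        (-1) ^ (i - 1) * (Nat.factorial (i - 1) : MvPolynomial (Fin i) ℤ) *
          ∏ j : Fin i, MvPolynomial.X j := by
  obtain ⟨n, rfl⟩ : ∃ n, i = n + 1 := ⟨i - 1, by omega⟩
  set ℓ : Finset (Fin (n + 1)) → MvPolynomial (Fin (n + 1)) ℤ :=
    fun S => ∑ j ∈ S, MvPolynomial.X j
  have hF₀ : constantCoeff F = 1 := by simp [hF]
  have hG₀ : constantCoeff G = 1 := by simp [hG]
  refine ⟨isUnit_iff_constantCoeff.mpr (hG₀ ▸ isUnit_one), fun H hGH => ?_⟩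
  have hH₀ : constantCoeff H = 1 := by simpa [hG₀] using congrArg constantCoeff hGH
  have hD := (d⁄dX _).leibniz_div_of_mul_eq_one hGH
    (hF ▸ derivative_prod_one_add_C_mul_X _ ℓ) (hG ▸ derivative_prod_one_add_C_mul_X _ ℓ)
  have hL : ∀ k ≤ n,
      coeff k (∑ S with Even (n + 1 - #S), C (ℓ S) * mk (fun m => (-ℓ S) ^ m)
        - ∑ S with Odd (n + 1 - #S), C (ℓ S) * mk (fun m => (-ℓ S) ^ m))
      = (-1) ^ k * if k = n then
          ((n + 1)! : MvPolynomial (Fin (n + 1)) ℤ) * ∏ j, MvPolynomial.X j else 0 := by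
    intro k hk
    rw [map_sub, coeff_sum_C_mul_mk_neg_pow, coeff_sum_C_mul_mk_neg_pow, ← mul_sub,
      sum_filter_even_sub_sum_filter_odd]
    have h := sum_powerset_neg_one_pow_mul_sum_pow (MvPolynomial.X (R := ℤ))
      (univ : Finset (Fin (n + 1))) (m := k + 1) (by simpa using hk)
    rw [powerset_univ, card_univ, Fintype.card_fin] at h
    simp only [ℓ, h, Nat.add_right_cancel_iff]
  rw [Nat.add_sub_cancel]
  refine coeff_succ_eq_of_derivative_eq_mul (by simp [hF₀, hH₀]) hD (fun k hk => ?_) ?_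
  · rw [hL k hk.le, if_neg hk.ne, mul_zero]
  · rw [hL n le_rfl, if_pos rfl, Nat.factorial_succ]
    push_cast
    ring
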